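/- arXiv:2211.14672 — 2 statements merged into one kernel-verified Lean document; each statement's English description precedes it below -/
import Mathlib

section
/- Let K, L, t be natural numbers with L ≥ 1 and t + L ≤ K. Then, in ℚ, (C(t+L−1, t) · C(K, t+L)) / (C(K, t) · C(K−t−1, L−1)) = (K − t)/(L + t), where C(n, k) denotes the binomial coefficient n choose k. -/
/-!
Since `C(K, t+L) · C(t+L, t) = C(K, t) · C(K-t, L)`, the claim reduces to the two absorption
identities `(t+L) · C(t+L-1, t) = L · C(t+L, t)` and `(K-t) · C(K-t-1, L-1) = L · C(K-t, L)`: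
after cross-multiplying, both sides become `L · C(K, t) · C(K-t, L)`.
-/

namespace Nat

theorem mul_choose_pred_left (n k : ℕ) : n * (n - 1).choose k = (n - k) * n.choose k := by
  rcases n with _ | n
  · simp
  · simpa [Nat.mul_comm] using choose_mul_succ_eq n k

theorem mul_choose_pred_pred (n : ℕ) {k : ℕ} (hk : 1 ≤ k) :
    n * (n - 1).choose (k - 1) = k * n.choose k := by
  obtain ⟨k, rfl⟩ := Nat.exists_eq_add_of_le' hk
  rcases n with _ | n
  · simp
  · simpa [Nat.mul_comm] using add_one_mul_choose_eq n k

theorem choose_add_mul_choose_left (K t L : ℕ) :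
    K.choose (t + L) * (t + L).choose t = K.choose t * (K - t).choose L := by
  simpa using choose_mul (n := K) (Nat.le_add_right t L)

theorem choose_block_count_cross {K L t : ℕ} (hL : 1 ≤ L) :
    (t + L - 1).choose t * K.choose (t + L) * (L + t) =
      K.choose t * (K - t - 1).choose (L - 1) * (K - t) := by
  have habsorb := mul_choose_pred_left (t + L) t
  rw [Nat.add_sub_cancel_left] at habsorb
  calc (t + L - 1).choose t * K.choose (t + L) * (L + t)
      = (t + L) * (t + L - 1).choose t * K.choose (t + L) := by ring
    _ = L * (K.choose (t + L) * (t + L).choose t) := by rw [habsorb]; ring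
    _ = L * (K - t).choose L * K.choose t := by rw [choose_add_mul_choose_left]; ring
    _ = K.choose t * (K - t - 1).choose (L - 1) * (K - t) := by
      rw [← mul_choose_pred_pred (K - t) hL]; ring

end Nat

/-- Coding-delay counting identity for the secure multi-transmitter scheme:
`C(t+L−1,t)·C(K,t+L) / (C(K,t)·C(K−t−1,L−1)) = (K−t)/(L+t)` in `ℚ`. -/
theorem secure_multi_transmitter_block_count
    (K L t : ℕ) (hL : 1 ≤ L) (hK : t + L ≤ K) :
    ((Nat.choose (t + L - 1) t : ℚ) * (Nat.choose K (t + L) : ℚ)) /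
        ((Nat.choose K t : ℚ) * (Nat.choose (K - t - 1) (L - 1) : ℚ)) =
      ((K : ℚ) - t) / ((L : ℚ) + t) := by
  have hdenom : (Nat.choose K t : ℚ) * (Nat.choose (K - t - 1) (L - 1) : ℚ) ≠ 0 := by
    have := Nat.choose_pos (n := K) (k := t) (by omega)
    have := Nat.choose_pos (n := K - t - 1) (k := L - 1) (by omega)
    positivity
  have hsize : (L : ℚ) + t ≠ 0 := by positivity
  rw [div_eq_div_iff hdenom hsize, ← Nat.cast_sub (by omega : t ≤ K)]
  exact_mod_cast (Nat.choose_block_count_cross (K := K) (t := t) hL).trans (Nat.mul_comm _ _)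
end

section
/- Let K, N, L, t be natural numbers with 1 ≤ t and t + L ≤ K and L ≥ 1. Then, in ℚ, N · C(K−1, t−1) / C(K, t) + (C(K−1, t+L−1) · C(t+L−1, t)) / (C(K, t) · C(K−t−1, L−1)) = N·t/K + (K − t)/K. In particular, the data stored per user occupies N·t/K files and the keys occupy (K−t)/K of a file, so the total cache usage equals M = N·t/K + (1 − t/K). -/
/-!
Each of the two ratios collapses by an absorption identity for binomial coefficients.
For the data, `K · C(K−1, t−1) = t · C(K, t)`. For the keys, choosing a `(t+L−1)`-set and
then a `t`-subset of it is the same as choosing the `t`-set first and then its `L−1`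
companions, so `C(K−1, t+L−1) · C(t+L−1, t) = C(K−1, t) · C(K−t−1, L−1)`; the second factor
cancels, and `K · C(K−1, t) = (K − t) · C(K, t)`.
-/

namespace Nat

variable {𝕜 : Type*} [Field 𝕜] [CharZero 𝕜]

theorem cast_choose_pred_pred_div_choose {n k : ℕ} (hk : 1 ≤ k) (hkn : k ≤ n) :
    ((n - 1).choose (k - 1) : 𝕜) / n.choose k = k / n := by
  obtain ⟨n, rfl⟩ : ∃ m, n = m + 1 := ⟨n - 1, by omega⟩
  obtain ⟨k, rfl⟩ : ∃ j, k = j + 1 := ⟨k - 1, by omega⟩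
  have hchoose : ((n + 1).choose (k + 1) : 𝕜) ≠ 0 := by exact_mod_cast (choose_pos hkn).ne'
  rw [div_eq_div_iff hchoose (by exact_mod_cast n.succ_ne_zero), Nat.add_sub_cancel,
    Nat.add_sub_cancel]
  have habsorb := n.add_one_mul_choose_eq k
  exact_mod_cast (by linarith [habsorb] : n.choose k * (n + 1) = (k + 1) * (n + 1).choose (k + 1))

theorem cast_choose_pred_div_choose {n k : ℕ} (hn : 1 ≤ n) (hkn : k ≤ n) :
    ((n - 1).choose k : 𝕜) / n.choose k = (n - k) / n := by
  obtain ⟨n, rfl⟩ : ∃ m, n = m + 1 := ⟨n - 1, by omega⟩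
  have hchoose : ((n + 1).choose k : 𝕜) ≠ 0 := by exact_mod_cast (choose_pos hkn).ne'
  rw [div_eq_div_iff hchoose (by exact_mod_cast n.succ_ne_zero), Nat.add_sub_cancel,
    ← Nat.cast_sub hkn]
  have habsorb := n.choose_mul_succ_eq k
  exact_mod_cast (by linarith [habsorb] : n.choose k * (n + 1) = (n + 1 - k) * (n + 1).choose k)

end Nat

/-- Cache memory accounting for the secure centralized multi-transmitter
scheme: data storage `N·C(K−1,t−1)/C(K,t)` plus key storage
`C(K−1,t+L−1)·C(t+L−1,t)/(C(K,t)·C(K−t−1,L−1))` equals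
`N·t/K + (K−t)/K` in `ℚ`. -/
theorem secure_multi_transmitter_memory
    (K N L t : ℕ) (ht : 1 ≤ t) (hK : t + L ≤ K) (hL : 1 ≤ L) :
    (N : ℚ) * (Nat.choose (K - 1) (t - 1) : ℚ) / (Nat.choose K t : ℚ) +
        ((Nat.choose (K - 1) (t + L - 1) : ℚ) * (Nat.choose (t + L - 1) t : ℚ)) /
          ((Nat.choose K t : ℚ) * (Nat.choose (K - t - 1) (L - 1) : ℚ)) =
      (N : ℚ) * t / K + ((K : ℚ) - t) / K := by
  have htK : t ≤ K := by omega
  have hkeys : ((K - 1).choose (t + L - 1) * (t + L - 1).choose t : ℚ) =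
      (K - 1).choose t * (K - t - 1).choose (L - 1) := by
    rw [← Nat.cast_mul, Nat.choose_mul (by omega), Nat.sub_right_comm, Nat.add_sub_assoc hL,
      Nat.add_sub_cancel_left, Nat.cast_mul]
  have hcompanions : ((K - t - 1).choose (L - 1) : ℚ) ≠ 0 := by
    exact_mod_cast (Nat.choose_pos (by omega)).ne'
  rw [hkeys, mul_div_mul_right _ _ hcompanions, mul_div_assoc,
    Nat.cast_choose_pred_pred_div_choose ht htK, Nat.cast_choose_pred_div_choose (by omega) htK,
    mul_div_assoc]
end
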